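/- Let (Ω, F, P) be a probability space with a filtration (Fₙ), (Zₙ) an adapted sequence of nonnegative integrable random variables, and (Aₙ) a decreasing sequence of events with Aₙ ∈ Fₙ. Assume that for each n, 1_{Aₙ}·E[Z_{n+1} | Fₙ] ≤ 1_{Aₙ}·r·Zₙ a.s. for some constant r ∈ (0,1), and that A_{n+1} ⊆ Aₙ. Then ∫_{Aₙ} Zₙ dP ≤ r^{n−1} ∫_{A₁} Z₁ dP for every n ≥ 1. -/
import Mathlib

open MeasureTheory Set

/-- conditional contraction on a decreasing sequence of adapted events
yields the geometric decay of ∫_{Aₙ} Zₙ dP. -/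
theorem stmt7 {Ω : Type*} {m0 : MeasurableSpace Ω} (P : Measure Ω)
    [IsProbabilityMeasure P] (ℱ : Filtration ℕ m0)
    (Z : ℕ → Ω → ℝ) (hadp : Adapted ℱ Z)
    (hZnonneg : ∀ n, 0 ≤ᵐ[P] Z n) (hZint : ∀ n, Integrable (Z n) P)
    (A : ℕ → Set Ω) (hA : ∀ n, MeasurableSet[ℱ n] (A n))
    (hAdec : ∀ n, A (n + 1) ⊆ A n)
    (r : ℝ) (hr : r ∈ Ioo (0:ℝ) 1)
    (hcontr : ∀ n, ∀ᵐ ω ∂P, ω ∈ A n → (P[Z (n + 1)|ℱ n]) ω ≤ r * Z n ω) :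
    ∀ n, 1 ≤ n → ∫ ω in A n, Z n ω ∂P ≤ r ^ (n - 1) * ∫ ω in A 1, Z 1 ω ∂P := by
  have hAm : ∀ n, MeasurableSet (A n) := fun n => ℱ.le n _ (hA n)
  intro n hn
  induction n with
  | zero => omega
  | succ n ih =>
    rcases Nat.eq_or_lt_of_le hn with h1 | h1
    · simp [← h1]
    · have hn' : 1 ≤ n := by omega
      have step : ∫ ω in A (n + 1), Z (n + 1) ω ∂P ≤ r * ∫ ω in A n, Z n ω ∂P := by
        have h1 : ∫ ω in A (n + 1), Z (n + 1) ω ∂P ≤ ∫ ω in A n, Z (n + 1) ω ∂P := by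
          apply setIntegral_mono_set ((hZint (n+1)).integrableOn)
            (ae_restrict_of_ae (hZnonneg (n+1)))
          exact HasSubset.Subset.eventuallyLE (hAdec n)
        have h2 : ∫ ω in A n, Z (n + 1) ω ∂P
            = ∫ ω in A n, (P[Z (n + 1)|ℱ n]) ω ∂P :=
          (setIntegral_condExp (ℱ.le n) (hZint (n+1)) (hA n)).symm
        have h3 : ∫ ω in A n, (P[Z (n + 1)|ℱ n]) ω ∂P
            ≤ ∫ ω in A n, r * Z n ω ∂P := by
          apply setIntegral_mono_on_ae (integrable_condExp.integrableOn)
            (((hZint n).const_mul r).integrableOn) (hAm n) (hcontr n)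
        have h4 : ∫ ω in A n, r * Z n ω ∂P = r * ∫ ω in A n, Z n ω ∂P := by
          rw [integral_const_mul]
        linarith
      calc ∫ ω in A (n + 1), Z (n + 1) ω ∂P ≤ r * ∫ ω in A n, Z n ω ∂P := step
        _ ≤ r * (r ^ (n - 1) * ∫ ω in A 1, Z 1 ω ∂P) := by
            exact mul_le_mul_of_nonneg_left (ih hn') hr.1.le
        _ = r ^ (n + 1 - 1) * ∫ ω in A 1, Z 1 ω ∂P := by
            rw [← mul_assoc, ← pow_succ']
            congr 2
            omega
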